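/- The complete tripartite graph K_{1,1,n} is interval colorable if and only if n is even. -/

import Mathlib

/-- The set of colors on edges incident to `v` (the spectrum of `v`). -/
def Spectrum {V : Type*} (G : SimpleGraph V) (c : G.edgeSet → ℕ) (v : V) : Set ℕ :=
  {k | ∃ e : G.edgeSet, v ∈ (e : Sym2 V) ∧ c e = k}

/-- `c` is an interval `t`-coloring of `G`: a proper edge-coloring with colors
`1,…,t`, all colors used, and each vertex's spectrum an interval of integers. -/
def IsIntervalColoring {V : Type*} (G : SimpleGraph V) (t : ℕ) (c : G.edgeSet → ℕ) : Prop :=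
  (∀ e, 1 ≤ c e ∧ c e ≤ t) ∧
  (∀ k, 1 ≤ k → k ≤ t → ∃ e, c e = k) ∧
  (∀ e₁ e₂ : G.edgeSet, e₁ ≠ e₂ → (∃ v, v ∈ (e₁ : Sym2 V) ∧ v ∈ (e₂ : Sym2 V)) →
    c e₁ ≠ c e₂) ∧
  (∀ v : V, ∃ a b : ℕ, Spectrum G c v = Set.Icc a b)

/-- Which part of the tripartition a vertex belongs to. -/
def tripart (m n : ℕ) : Fin 1 ⊕ Fin m ⊕ Fin n → Fin 3
  | .inl _ => 0
  | .inr (.inl _) => 1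
  | .inr (.inr _) => 2

/-- The complete tripartite graph `K_{1,m,n}`. -/
def K1mn (m n : ℕ) : SimpleGraph (Fin 1 ⊕ Fin m ⊕ Fin n) where
  Adj a b := tripart m n a ≠ tripart m n b
  symm := ⟨fun _ _ h => h.symm⟩
  loopless := ⟨fun _ h => h rfl⟩

/-!
Write `u`, `v` for the vertices of the two singleton parts and `w₀, …, wₙ₋₁` for the
others.

If `n` is odd there is no interval coloring, by parity. In an interval coloring the colors at a
vertex of degree `d` are `a, a + 1, …, a + d - 1` for some `a`, and summing these over all
vertices counts every edge color twice, so the total is even. Here `u` and `v` have the even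
degree `n + 1` and contribute `(n + 1)(a_u + a_v) + 2(0 + 1 + ⋯ + n)`, an even number, while each
`wᵢ` contributes the odd number `2aᵢ + 1`; the total is then congruent to `n`, which is odd.

If `n` is even, color `uv` with `1`, `uwᵢ` with `i + 2` and `vwᵢ` with `partner i + 2`, where
`partner` swaps `2j` and `2j + 1`. Since `partner` permutes `{0, …, n - 1}`, both `u` and `v`
see the colors `1, …, n + 1`, and `wᵢ` sees the two consecutive colors `i + 2` and
`partner i + 2`.
-/

open Finset

namespace SimpleGraph

variable {V : Type*} [Fintype V] [DecidableEq V] {G : SimpleGraph V} [DecidableRel G.Adj]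

lemma sum_sum_incident_eq_two_nsmul {M : Type*} [AddCommMonoid M] (c : G.edgeSet → M) :
    ∑ v, ∑ e : G.edgeSet with v ∈ e.1, c e = 2 • ∑ e, c e := by
  refine (sum_comm' (s' := fun e : G.edgeSet => e.1.toFinset) (t' := univ) (by simp)).trans ?_
  rw [smul_sum]
  refine sum_congr rfl fun e _ => ?_
  rw [sum_const, Sym2.card_toFinset_of_not_isDiag _ (G.not_isDiag_of_mem_edgeSet e.2)]

lemma card_incident_eq_degree (v : V) : #{e : G.edgeSet | v ∈ e.1} = G.degree v := by
  rw [← G.card_incidenceFinset_eq_degree]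
  refine card_bij (fun e _ => e.1) (by simp [incidenceSet]) (by simp) ?_
  simp only [mem_incidenceFinset, incidenceSet]
  exact fun e ⟨he, hv⟩ => ⟨⟨e, he⟩, by simpa using hv, rfl⟩

lemma _root_.IsIntervalColoring.exists_sum_incident_eq {t : ℕ} {c : G.edgeSet → ℕ}
    (hc : IsIntervalColoring G t c) (v : V) :
    ∃ a, ∑ e : G.edgeSet with v ∈ e.1, c e = ∑ k ∈ range (G.degree v), (a + k) := by
  obtain ⟨-, -, hproper, hinterval⟩ := hc
  obtain ⟨a, b, hab⟩ := hinterval v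
  set E : Finset G.edgeSet := {e | v ∈ e.1}
  have hinj : Set.InjOn c E := fun e₁ he₁ e₂ he₂ hce => by
    by_contra hne
    exact hproper e₁ e₂ hne ⟨v, by simpa [E] using he₁, by simpa [E] using he₂⟩ hce
  have himage : E.image c = Icc a b := by
    rw [← coe_inj, coe_Icc, ← hab]
    ext k
    simp [E, Spectrum]
  have hcard : b + 1 - a = G.degree v := by
    rw [← Nat.card_Icc, ← himage, card_image_of_injOn hinj, G.card_incident_eq_degree]
  refine ⟨a, ?_⟩
  calc ∑ e ∈ E, c e = ∑ k ∈ E.image c, k := (sum_image (f := id) hinj).symm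
    _ = ∑ k ∈ Ico a (b + 1), k := by rw [himage, Ico_add_one_right_eq_Icc]
    _ = ∑ k ∈ range (G.degree v), (a + k) := by rw [sum_Ico_eq_sum_range, hcard]

end SimpleGraph

section SymmetricColoring

variable {V : Type*} {G : SimpleGraph V}

lemma isIntervalColoring_of_spectrum {t : ℕ} {c : G.edgeSet → ℕ}
    (hproper : ∀ e₁ e₂ : G.edgeSet, e₁ ≠ e₂ → (∃ v, v ∈ e₁.1 ∧ v ∈ e₂.1) → c e₁ ≠ c e₂)
    {x₀ : V} (hx₀ : Spectrum G c x₀ = Set.Icc 1 t)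
    (hspec : ∀ x, ∃ a b, 1 ≤ a ∧ b ≤ t ∧ Spectrum G c x = Set.Icc a b) :
    IsIntervalColoring G t c := by
  refine ⟨fun e => ?_, fun k hk₁ hk₂ => ?_, hproper, fun x => ?_⟩
  · obtain ⟨x, hx⟩ : ∃ x, x ∈ e.1 :=
      Sym2.inductionOn e.1 fun x _ => ⟨x, Sym2.mem_mk_left _ _⟩
    obtain ⟨a, b, ha, hb, hab⟩ := hspec x
    have hmem : c e ∈ Spectrum G c x := ⟨e, hx, rfl⟩
    rw [hab] at hmem
    exact ⟨ha.trans hmem.1, hmem.2.trans hb⟩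
  · obtain ⟨e, -, he⟩ : k ∈ Spectrum G c x₀ := hx₀ ▸ ⟨hk₁, hk₂⟩
    exact ⟨e, he⟩
  · obtain ⟨a, b, -, -, hab⟩ := hspec x
    exact ⟨a, b, hab⟩

variable (f : V → V → ℕ) (hf : ∀ x y, f x y = f y x)

lemma spectrum_sym2Lift (x : V) :
    Spectrum G (fun e => Sym2.lift ⟨f, hf⟩ e.1) x = f x '' G.neighborSet x := by
  ext k
  constructor
  · rintro ⟨⟨e, he⟩, hx, rfl⟩
    obtain ⟨y, rfl⟩ := Sym2.mem_iff_exists.mp hx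
    exact ⟨y, he, rfl⟩
  · rintro ⟨y, hy, rfl⟩
    exact ⟨⟨s(x, y), hy⟩, Sym2.mem_mk_left _ _, rfl⟩

lemma sym2Lift_ne_of_injOn (hinj : ∀ x, Set.InjOn (f x) (G.neighborSet x))
    (e₁ e₂ : G.edgeSet) (hne : e₁ ≠ e₂) (hshare : ∃ v, v ∈ e₁.1 ∧ v ∈ e₂.1) :
    Sym2.lift ⟨f, hf⟩ e₁.1 ≠ Sym2.lift ⟨f, hf⟩ e₂.1 := by
  obtain ⟨e₁, he₁⟩ := e₁
  obtain ⟨e₂, he₂⟩ := e₂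
  obtain ⟨x, hx₁, hx₂⟩ := hshare
  obtain ⟨y₁, rfl⟩ := Sym2.mem_iff_exists.mp hx₁
  obtain ⟨y₂, rfl⟩ := Sym2.mem_iff_exists.mp hx₂
  intro hcol
  obtain rfl : y₁ = y₂ := hinj x he₁ he₂ hcol
  exact hne rfl

end SymmetricColoring

namespace K1mn

variable {m n : ℕ}

lemma adj_iff {a b : Fin 1 ⊕ Fin m ⊕ Fin n} :
    (K1mn m n).Adj a b ↔ tripart m n a ≠ tripart m n b :=
  Iff.rfl

instance : DecidableRel (K1mn m n).Adj := fun _ _ => decidable_of_iff' _ adj_iff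

lemma degree_inl (x : Fin 1) : (K1mn m n).degree (.inl x) = m + n := by
  simp [← SimpleGraph.card_neighborFinset_eq_degree, SimpleGraph.neighborFinset_eq_filter,
    card_filter, Fintype.sum_sum_type, adj_iff, tripart]

lemma degree_inr_inl (y : Fin m) : (K1mn m n).degree (.inr (.inl y)) = 1 + n := by
  simp [← SimpleGraph.card_neighborFinset_eq_degree, SimpleGraph.neighborFinset_eq_filter,
    card_filter, Fintype.sum_sum_type, adj_iff, tripart]

lemma degree_inr_inr (z : Fin n) : (K1mn m n).degree (.inr (.inr z)) = 1 + m := by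
  simp [← SimpleGraph.card_neighborFinset_eq_degree, SimpleGraph.neighborFinset_eq_filter,
    card_filter, Fintype.sum_sum_type, adj_iff, tripart]

lemma even_of_isIntervalColoring {t : ℕ} {c : (K1mn 1 n).edgeSet → ℕ}
    (hc : IsIntervalColoring (K1mn 1 n) t c) : Even n := by
  choose a ha using hc.exists_sum_incident_eq
  have hsum := SimpleGraph.sum_sum_incident_eq_two_nsmul c
  have hsum_range (b : ℕ) :
      ∑ k ∈ range (1 + n), (b + k) = (1 + n) * b + ∑ k ∈ range (1 + n), k := by
    rw [sum_add_distrib, sum_const, card_range, smul_eq_mul]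
  have hsum_range_two (b : ℕ) : ∑ k ∈ range (1 + 1), (b + k) = 2 * b + 1 := by
    rw [sum_range_succ, sum_range_one]; omega
  simp only [ha, Fintype.sum_sum_type, Fin.sum_univ_one, degree_inl, degree_inr_inl,
    degree_inr_inr, hsum_range, hsum_range_two, sum_add_distrib, ← mul_sum, sum_const, card_univ,
    Fintype.card_fin, smul_eq_mul, mul_one] at hsum
  rcases Nat.even_or_odd n with hn | ⟨m, rfl⟩
  · exact hn
  · have hdeg (b : ℕ) : (1 + (2 * m + 1)) * b = 2 * ((m + 1) * b) := by ring
    rw [hdeg, hdeg] at hsum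
    omega

def partner (i : ℕ) : ℕ := if i % 2 = 0 then i + 1 else i - 1

lemma partner_partner (i : ℕ) : partner (partner i) = i := by
  unfold partner; split_ifs <;> omega

lemma partner_lt (hn : Even n) {i : ℕ} (hi : i < n) : partner i < n := by
  rw [Nat.even_iff] at hn; unfold partner; split_ifs <;> omega

def edgeColor (n : ℕ) : Fin 1 ⊕ Fin 1 ⊕ Fin n → Fin 1 ⊕ Fin 1 ⊕ Fin n → ℕ
  | .inl _, .inr (.inl _) | .inr (.inl _), .inl _ => 1
  | .inl _, .inr (.inr i) | .inr (.inr i), .inl _ => i + 2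
  | .inr (.inl _), .inr (.inr i) | .inr (.inr i), .inr (.inl _) => partner i + 2
  | _, _ => 0

lemma edgeColor_comm (x y : Fin 1 ⊕ Fin 1 ⊕ Fin n) : edgeColor n x y = edgeColor n y x := by
  rcases x with x | x | x <;> rcases y with y | y | y <;> rfl

lemma edgeColor_injOn (x : Fin 1 ⊕ Fin 1 ⊕ Fin n) :
    Set.InjOn (edgeColor n x) ((K1mn 1 n).neighborSet x) := by
  rintro (y | y | y) hy (z | z | z) hz h <;> rcases x with x | x | x <;>
    simp_all [edgeColor, adj_iff, tripart, partner, Fin.ext_iff] <;> split_ifs at h <;> omega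

lemma image_edgeColor_inl (x : Fin 1) :
    edgeColor n (.inl x) '' (K1mn 1 n).neighborSet (.inl x) = Set.Icc 1 (n + 1) := by
  ext k
  simp only [Set.mem_image, SimpleGraph.mem_neighborSet, Sum.exists, adj_iff, tripart, edgeColor,
    ne_eq, not_true_eq_false, false_and, exists_const, zero_ne_one, not_false_eq_true, true_and,
    Fin.reduceEq, false_or, Set.mem_Icc]
  constructor
  · rintro (rfl | ⟨i, rfl⟩) <;> omega
  · rintro ⟨hk₁, hk₂⟩
    obtain rfl | hk₁ := hk₁.eq_or_lt
    · exact .inl rfl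
    · exact .inr ⟨⟨k - 2, by omega⟩, Nat.sub_add_cancel hk₁⟩

lemma image_edgeColor_inr_inl (hn : Even n) (x : Fin 1) :
    edgeColor n (.inr (.inl x)) '' (K1mn 1 n).neighborSet (.inr (.inl x)) =
      Set.Icc 1 (n + 1) := by
  ext k
  simp only [Set.mem_image, SimpleGraph.mem_neighborSet, Sum.exists, adj_iff, tripart, edgeColor,
    ne_eq, one_ne_zero, not_false_eq_true, true_and, exists_const, not_true_eq_false, false_and,
    Fin.reduceEq, false_or, Set.mem_Icc]
  constructor
  · rintro (rfl | ⟨i, rfl⟩)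
    · omega
    · have := partner_lt hn i.2; omega
  · rintro ⟨hk₁, hk₂⟩
    obtain rfl | hk₁ := hk₁.eq_or_lt
    · exact .inl rfl
    · refine .inr ⟨⟨partner (k - 2), partner_lt hn (by omega)⟩, ?_⟩
      simp only [partner_partner]
      omega

lemma image_edgeColor_inr_inr (i : Fin n) :
    edgeColor n (.inr (.inr i)) '' (K1mn 1 n).neighborSet (.inr (.inr i)) =
      Set.Icc ((i : ℕ) + 2 - i % 2) (i + 3 - i % 2) := by
  ext k
  simp only [Set.mem_image, SimpleGraph.mem_neighborSet, Sum.exists, adj_iff, tripart, edgeColor,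
    ne_eq, Fin.reduceEq, not_false_eq_true, true_and, exists_const, partner, not_true_eq_false,
    false_and, exists_false, or_false, Set.mem_Icc]
  split_ifs <;> omega

lemma isIntervalColoring_edgeColor (hn : Even n) :
    IsIntervalColoring (K1mn 1 n) (n + 1)
      (fun e => Sym2.lift ⟨edgeColor n, edgeColor_comm⟩ e.1) := by
  refine isIntervalColoring_of_spectrum (sym2Lift_ne_of_injOn _ _ edgeColor_injOn) (x₀ := .inl 0)
    (by rw [spectrum_sym2Lift, image_edgeColor_inl]) ?_
  rintro (x | x | i) <;> rw [spectrum_sym2Lift]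
  · exact ⟨1, n + 1, le_rfl, le_rfl, image_edgeColor_inl x⟩
  · exact ⟨1, n + 1, le_rfl, le_rfl, image_edgeColor_inr_inl hn x⟩
  · have hi := i.2
    rw [Nat.even_iff] at hn
    exact ⟨_, _, by omega, by omega, image_edgeColor_inr_inr i⟩

end K1mn

theorem stmt_7_general (n : ℕ) :
    (∃ (t : ℕ) (c : (K1mn 1 n).edgeSet → ℕ), 0 < t ∧ IsIntervalColoring (K1mn 1 n) t c) ↔
      Even n :=
  ⟨fun ⟨_, _, _, hc⟩ => K1mn.even_of_isIntervalColoring hc,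
    fun hn => ⟨n + 1, _, n.succ_pos, K1mn.isIntervalColoring_edgeColor hn⟩⟩

theorem stmt_7 (n : ℕ) (hn : 0 < n) :
    (∃ (t : ℕ) (c : (K1mn 1 n).edgeSet → ℕ), 0 < t ∧ IsIntervalColoring (K1mn 1 n) t c) ↔
      Even n :=
  stmt_7_general n
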